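/- arXiv:2004.00233 — 9 statements merged into one kernel-verified Lean document; each statement's English description precedes it below -/
import Mathlib

section
/- Let f(x) = a_0 + a_{n_1}x^{n_1} + ... + a_{n_r}x^{n_r} be an integer polynomial with |a_0| > |a_{n_1}| + ... + |a_{n_r}| and a_{n_r} ≠ 0. Then every nonconstant factor of f in Z[x] is non-reciprocal, i.e., no nonconstant factor g satisfies g(x) = ±x^{deg g} g(1/x). -/
/-! A reciprocal polynomial has its roots closed under `z ↦ z⁻¹`, so it has a complex root in the
closed unit disc. On that disc the constant term `a₀` of `f` strictly outweighs all other terms,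
so `f`, and hence every factor of `f`, has no root there. -/

open Polynomial

theorem add_sum_mul_pow_ne_zero {K ι : Type*} [NormedDivisionRing K] (s : Finset ι)
    (a0 : K) (a : ι → K) (n : ι → ℕ) {z : K} (hz : ‖z‖ ≤ 1)
    (hdom : ∑ i ∈ s, ‖a i‖ < ‖a0‖) :
    a0 + ∑ i ∈ s, a i * z ^ n i ≠ 0 := by
  intro h
  have hterm (i : ι) : ‖a i * z ^ n i‖ ≤ ‖a i‖ := by
    rw [norm_mul, norm_pow]
    exact mul_le_of_le_one_right (norm_nonneg _) (pow_le_one₀ (norm_nonneg z) hz)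
  have : ‖a0‖ ≤ ∑ i ∈ s, ‖a i‖ :=
    calc ‖a0‖ = ‖∑ i ∈ s, a i * z ^ n i‖ := by rw [eq_neg_of_add_eq_zero_left h, norm_neg]
      _ ≤ ∑ i ∈ s, ‖a i * z ^ n i‖ := norm_sum_le _ _
      _ ≤ ∑ i ∈ s, ‖a i‖ := Finset.sum_le_sum fun i _ => hterm i
  exact this.not_gt hdom

theorem exists_eval₂_eq_zero_norm_le_one_of_eq_reverse {R : Type*} [CommRing R]
    (φ : R →+* ℂ) {g : R[X]} (hdeg : 0 < (g.map φ).degree)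
    (hrec : g = g.reverse ∨ g = -g.reverse) :
    ∃ z : ℂ, ‖z‖ ≤ 1 ∧ g.eval₂ φ z = 0 := by
  obtain ⟨z, hz⟩ := Complex.exists_root hdeg
  rw [IsRoot, eval_map] at hz
  by_cases hz1 : ‖z‖ ≤ 1
  · exact ⟨z, hz1, hz⟩
  have : Invertible z := invertibleOfNonzero (by rintro rfl; simp at hz1)
  have hrev : g.reverse.eval₂ φ z⁻¹ = 0 := by
    rwa [← invOf_eq_inv, eval₂_reverse_eq_zero_iff]
  refine ⟨z⁻¹, by rw [norm_inv]; exact inv_le_one_of_one_le₀ (le_of_not_ge hz1), ?_⟩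
  rcases hrec with h | h <;> rw [h]
  · exact hrev
  · rw [eval₂_neg, hrev, neg_zero]

theorem stmt_2_general (r : ℕ) (n : Fin (r + 1) → ℕ) (a : Fin (r + 1) → ℤ) (a0 : ℤ)
    (hdom : |a0| > ∑ i, |a i|)
    (f : ℤ[X]) (hf : f = C a0 + ∑ i, C (a i) * X ^ (n i))
    (g : ℤ[X]) (hg : g ∣ f) (hgdeg : 0 < g.natDegree) :
    ¬ (g = g.reverse ∨ g = -g.reverse) := by
  intro hrec
  set φ := Int.castRingHom ℂ
  have hdeg : 0 < (g.map φ).degree := by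
    rwa [degree_map_eq_of_injective Int.cast_injective, ← natDegree_pos_iff_degree_pos]
  obtain ⟨z, hz, hgz⟩ := exists_eval₂_eq_zero_norm_le_one_of_eq_reverse φ hdeg hrec
  have hfz : f.eval₂ φ z = 0 := by
    obtain ⟨c, rfl⟩ := hg
    rw [eval₂_mul, hgz, zero_mul]
  refine add_sum_mul_pow_ne_zero Finset.univ (a0 : ℂ) (fun i => (a i : ℂ)) n hz ?_ ?_
  · simp only [Complex.norm_intCast]
    exact_mod_cast hdom
  · simp only [hf, eval₂_add, eval₂_finsetSum, eval₂_mul, eval₂_C, eval₂_X_pow] at hfz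
    simpa only [φ, eq_intCast] using hfz

theorem stmt_2 (r : ℕ) (n : Fin (r + 1) → ℕ) (a : Fin (r + 1) → ℤ) (a0 : ℤ)
    (hmono : StrictMono n) (hpos : 0 < n 0)
    (hdom : |a0| > ∑ i, |a i|) (hlead : a (Fin.last r) ≠ 0)
    (f : ℤ[X]) (hf : f = C a0 + ∑ i, C (a i) * X ^ (n i))
    (g : ℤ[X]) (hg : g ∣ f) (hgdeg : 0 < g.natDegree) :
    ¬ (g = g.reverse ∨ g = -g.reverse) :=
  stmt_2_general r n a a0 hdom f hf g hg hgdeg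
end

section
/- For positive integers n and m, write e(n) for the largest power of 2 dividing n. Then gcd(x^n + 1, x^m + 1) in Z[x] equals x^{gcd(n,m)} + 1 if e(n) = e(m), and equals 1 otherwise. -/
/-!
Put `g = gcd n m`. A common divisor of `x ^ n + 1` and `x ^ m + 1` divides `x ^ (2n) - 1` and
`x ^ (2m) - 1`, hence `x ^ (2g) - 1 = (x ^ g + 1)(x ^ g - 1)`; since `2` is invertible, it is
coprime to `x ^ g - 1 ∣ x ^ n - 1`, so it divides `x ^ g + 1`. If `e(n) = e(m)`, both `n / g` and
`m / g` are odd, so `x ^ g + 1` divides both polynomials and is their gcd. If `e(n) < e(m)`, then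
`2g ∣ m`, so `x ^ g + 1 ∣ x ^ (2g) - 1 ∣ x ^ m - 1`, which is coprime to `x ^ m + 1`.
-/

open Polynomial

namespace Nat

variable {n m : ℕ}

theorem factorization_div_gcd_left (hn : n ≠ 0) (hm : m ≠ 0) (p : ℕ) :
    (n / gcd n m).factorization p = n.factorization p - m.factorization p := by
  rw [factorization_div (gcd_dvd_left n m), Finsupp.tsub_apply, factorization_gcd hn hm,
    Finsupp.inf_apply]
  omega

theorem odd_div_gcd_of_factorization_two_le (hn : n ≠ 0) (hm : m ≠ 0)
    (h : n.factorization 2 ≤ m.factorization 2) : Odd (n / gcd n m) := by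
  have hq : n / gcd n m ≠ 0 :=
    (div_pos (gcd_le_left m (pos_of_ne_zero hn)) (gcd_pos_of_pos_left m (pos_of_ne_zero hn))).ne'
  rw [← not_even_iff_odd, even_iff_two_dvd]
  intro h2
  have := prime_two.factorization_pos_of_dvd hq h2
  rw [factorization_div_gcd_left hn hm] at this
  omega

theorem two_mul_gcd_dvd_of_factorization_two_lt (hn : n ≠ 0) (hm : m ≠ 0)
    (h : n.factorization 2 < m.factorization 2) : 2 * gcd n m ∣ m := by
  have h2 : 2 ∣ m / gcd m n := by
    apply dvd_of_factorization_pos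
    rw [factorization_div_gcd_left hm hn]
    omega
  rw [gcd_comm] at h2
  simpa [Nat.mul_div_cancel' (gcd_dvd_right n m), mul_comm] using
    mul_dvd_mul_left (gcd n m) h2

end Nat

section PowAddOne

variable {R : Type*} [CommRing R] {d x : R} {a b : ℕ}

theorem dvd_pow_sub_one_iff_pow_eq_one :
    d ∣ x ^ a - 1 ↔ Ideal.Quotient.mk (Ideal.span {d}) x ^ a = 1 := by
  rw [← Ideal.Quotient.eq_zero_iff_dvd, map_sub, map_pow, map_one, sub_eq_zero]

theorem dvd_pow_gcd_sub_one_iff :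
    d ∣ x ^ a.gcd b - 1 ↔ d ∣ x ^ a - 1 ∧ d ∣ x ^ b - 1 := by
  simp only [dvd_pow_sub_one_iff_pow_eq_one, pow_gcd_eq_one]

theorem isCoprime_add_one_sub_one (h2 : IsUnit (2 : R)) (y : R) : IsCoprime (y + 1) (y - 1) :=
  ⟨↑h2.unit⁻¹, -↑h2.unit⁻¹, by linear_combination h2.val_inv_mul⟩

theorem pow_add_one_dvd_pow_add_one (h : a ∣ b) (hodd : Odd (b / a)) :
    x ^ a + 1 ∣ x ^ b + 1 := by
  obtain ⟨c, rfl⟩ := h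
  rcases Nat.eq_zero_or_pos a with rfl | ha
  · simp
  rw [Nat.mul_div_cancel_left c ha] at hodd
  simpa [pow_mul] using hodd.add_dvd_pow_add_pow (x ^ a) 1

theorem pow_add_one_dvd_pow_two_mul_sub_one (k : ℕ) : x ^ k + 1 ∣ x ^ (2 * k) - 1 :=
  ⟨x ^ k - 1, by ring⟩

theorem dvd_pow_gcd_add_one (h2 : IsUnit (2 : R)) (ha : d ∣ x ^ a + 1) (hb : d ∣ x ^ b + 1) :
    d ∣ x ^ a.gcd b + 1 := by
  have hsq : d ∣ (x ^ a.gcd b + 1) * (x ^ a.gcd b - 1) := by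
    have := dvd_pow_gcd_sub_one_iff.mpr ⟨ha.trans (pow_add_one_dvd_pow_two_mul_sub_one a),
      hb.trans (pow_add_one_dvd_pow_two_mul_sub_one b)⟩
    rw [Nat.gcd_mul_left] at this
    convert this using 1
    ring
  have hcop : IsCoprime d (x ^ a.gcd b - 1) :=
    ((isCoprime_add_one_sub_one h2 _).of_isCoprime_of_dvd_left ha).of_isCoprime_of_dvd_right
      (dvd_pow_sub_one_of_dvd (Nat.gcd_dvd_left a b))
  exact hcop.dvd_of_dvd_mul_right hsq

theorem isUnit_of_dvd_pow_add_one_of_two_mul_dvd (h2 : IsUnit (2 : R)) (hab : 2 * a ∣ b)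
    (ha : d ∣ x ^ a + 1) (hb : d ∣ x ^ b + 1) : IsUnit d :=
  (isCoprime_add_one_sub_one h2 (x ^ b)).isUnit_of_dvd' hb
    (ha.trans ((pow_add_one_dvd_pow_two_mul_sub_one a).trans (dvd_pow_sub_one_of_dvd hab)))

end PowAddOne

theorem stmt_3 (n m : ℕ) (hn : 0 < n) (hm : 0 < m) :
    gcd ((X : ℚ[X]) ^ n + 1) ((X : ℚ[X]) ^ m + 1) =
      if 2 ^ (n.factorization 2) = 2 ^ (m.factorization 2) then
        (X : ℚ[X]) ^ (Nat.gcd n m) + 1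
      else 1 := by
  have h2 : IsUnit (2 : ℚ[X]) := by
    simpa only [map_ofNat] using (IsUnit.mk0 (2 : ℚ) two_ne_zero).map C
  have hgcd := dvd_pow_gcd_add_one h2 (gcd_dvd_left ((X : ℚ[X]) ^ n + 1) (X ^ m + 1))
    (gcd_dvd_right _ _)
  split_ifs with h
  · replace h := Nat.pow_right_injective le_rfl h
    have hn' := Nat.odd_div_gcd_of_factorization_two_le hn.ne' hm.ne' h.le
    have hm' := Nat.odd_div_gcd_of_factorization_two_le hm.ne' hn.ne' h.ge
    rw [Nat.gcd_comm] at hm'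
    rw [gcd_eq_normalize hgcd (dvd_gcd (pow_add_one_dvd_pow_add_one (Nat.gcd_dvd_left n m) hn')
      (pow_add_one_dvd_pow_add_one (Nat.gcd_dvd_right n m) hm'))]
    exact (monic_X_pow_add_C (1 : ℚ) (Nat.gcd_pos_of_pos_left m hn).ne').normalize_eq_self
  · rw [← normalize_gcd, normalize_eq_one]
    have hne : n.factorization 2 ≠ m.factorization 2 := fun he => h (by rw [he])
    rcases hne.lt_or_gt with hlt | hlt
    · exact isUnit_of_dvd_pow_add_one_of_two_mul_dvd h2
        (Nat.two_mul_gcd_dvd_of_factorization_two_lt hn.ne' hm.ne' hlt) hgcd (gcd_dvd_right _ _)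
    · rw [Nat.gcd_comm] at hgcd
      exact isUnit_of_dvd_pow_add_one_of_two_mul_dvd h2
        (Nat.two_mul_gcd_dvd_of_factorization_two_lt hm.ne' hn.ne' hlt) hgcd (gcd_dvd_left _ _)
end

section
/- Let p be a prime and a_1, ..., a_n integers with a_n ≠ 0 and p > |a_1| + |a_2| + ... + |a_n|. Then the polynomial a_n x^n + ... + a_1 x + p is irreducible over Z. -/
/-!
If `|z| ≤ 1` then `|a_n z^n + ⋯ + a_1 z| ≤ |a_1| + ⋯ + |a_n| < p`, so every complex root of `f`
lies outside the closed unit disc. For a non-constant integer factor `g` of `f` this forces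
`|g(0)| = |lc g| · ∏ |roots of g| > 1`. Since `g(0) h(0) = p` is prime, one of the factors has
constant term `±1`, hence is constant and a unit.
-/

open Polynomial

theorem one_lt_norm_of_add_sum_mul_pow_eq_zero {K ι : Type*} [NormedDivisionRing K]
    {s : Finset ι} {a : ι → K} {e : ι → ℕ} {c z : K} (hc : ∑ i ∈ s, ‖a i‖ < ‖c‖)
    (hz : c + ∑ i ∈ s, a i * z ^ e i = 0) : 1 < ‖z‖ := by
  by_contra! hz1
  have hsum : ‖∑ i ∈ s, a i * z ^ e i‖ ≤ ∑ i ∈ s, ‖a i‖ :=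
    (norm_sum_le _ _).trans <| Finset.sum_le_sum fun i _ => by
      rw [norm_mul, norm_pow]
      exact mul_le_of_le_one_right (norm_nonneg _) (pow_le_one₀ (norm_nonneg _) hz1)
  rw [eq_neg_of_add_eq_zero_left hz, norm_neg] at hc
  exact hc.not_ge hsum

theorem norm_leadingCoeff_lt_norm_coeff_zero {K : Type*} [NormedField K] [IsAlgClosed K]
    {G : K[X]} (hdeg : 0 < G.natDegree) (hroots : ∀ z, G.IsRoot z → 1 < ‖z‖) :
    ‖G.leadingCoeff‖ < ‖G.coeff 0‖ := by
  have hG : G.Splits := IsAlgClosed.splits G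
  have hne : G.roots ≠ 0 := by
    rwa [← Multiset.card_pos, ← hG.natDegree_eq_card_roots]
  have hprod : 1 < ‖G.roots.prod‖ := by
    rw [← normHom_apply, map_multiset_prod]
    simpa using Multiset.prod_map_lt_prod_map hne (fun _ => (1 : ℝ)) (‖·‖)
      (fun _ _ => one_pos) fun z hz => hroots z (isRoot_of_mem_roots hz)
  have hlead : 0 < ‖G.leadingCoeff‖ := by
    simpa using ne_zero_of_natDegree_gt hdeg
  rw [hG.coeff_zero_eq_leadingCoeff_mul_prod_roots, norm_mul, norm_mul, norm_pow, norm_neg,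
    norm_one, one_pow, one_mul]
  exact lt_mul_of_one_lt_right hlead hprod

theorem isUnit_of_isUnit_coeff_zero_of_one_lt_norm_roots {g : ℤ[X]} (h0 : IsUnit (g.coeff 0))
    (hroots : ∀ z : ℂ, aeval z g = 0 → 1 < ‖z‖) : IsUnit g := by
  by_cases hdeg : g.natDegree = 0
  · rw [eq_C_of_natDegree_eq_zero hdeg]
    exact h0.map C
  · have hinj : Function.Injective (algebraMap ℤ ℂ) := RingHom.injective_int _
    have := norm_leadingCoeff_lt_norm_coeff_zero (G := g.map (algebraMap ℤ ℂ))
      (by rw [natDegree_map_eq_of_injective hinj]; omega)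
      (fun z hz => hroots z (by rwa [IsRoot, eval_map_algebraMap] at hz))
    rw [leadingCoeff_map_of_injective hinj, coeff_map, algebraMap_int_eq, eq_intCast, eq_intCast,
      Complex.norm_intCast, Complex.norm_intCast, ← Int.cast_abs, ← Int.cast_abs,
      Int.isUnit_iff_abs_eq.mp h0] at this
    have hlead : 1 ≤ |g.leadingCoeff| :=
      Int.one_le_abs (leadingCoeff_ne_zero.mpr (ne_zero_of_natDegree_gt (Nat.pos_of_ne_zero hdeg)))
    exact absurd (by exact_mod_cast this : |g.leadingCoeff| < 1) hlead.not_gt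

theorem irreducible_of_irreducible_coeff_zero_of_one_lt_norm_roots {f : ℤ[X]}
    (hdeg : 0 < f.natDegree) (h0 : Irreducible (f.coeff 0))
    (hroots : ∀ z : ℂ, aeval z f = 0 → 1 < ‖z‖) : Irreducible f := by
  refine ⟨fun hu => hdeg.ne' (natDegree_eq_zero_of_isUnit hu), fun g h hf => ?_⟩
  subst hf
  rw [mul_coeff_zero] at h0
  exact (h0.isUnit_or_isUnit rfl).imp
    (isUnit_of_isUnit_coeff_zero_of_one_lt_norm_roots · fun z hz => hroots z (by simp [hz]))
    (isUnit_of_isUnit_coeff_zero_of_one_lt_norm_roots · fun z hz => hroots z (by simp [hz]))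

theorem stmt_5 (p : ℕ) (hp : p.Prime) (m : ℕ) (a : Fin (m + 1) → ℤ)
    (hlead : a (Fin.last m) ≠ 0)
    (hdom : (p : ℤ) > ∑ i, |a i|)
    (f : ℤ[X]) (hf : f = C (p : ℤ) + ∑ i, C (a i) * X ^ ((i : ℕ) + 1)) :
    Irreducible f := by
  subst hf
  apply irreducible_of_irreducible_coeff_zero_of_one_lt_norm_roots
  · refine lt_of_lt_of_le (Nat.succ_pos m) (le_natDegree_of_ne_zero ?_)
    have hlast (i : Fin (m + 1)) : m = i ↔ i = Fin.last m := by
      rw [Fin.ext_iff, Fin.val_last, eq_comm]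
    simpa [finsetSum_coeff, coeff_C, coeff_X_pow, hlast] using hlead
  · simpa using (Nat.prime_iff_prime_int.mp hp).irreducible
  · intro z hz
    simp only [map_add, map_sum, map_mul, aeval_X_pow, eq_intCast] at hz
    refine one_lt_norm_of_add_sum_mul_pow_eq_zero ?_ hz
    simpa [Complex.norm_intCast] using (by exact_mod_cast hdom : (∑ i, |a i| : ℝ) < p)
end

section
/- Let p be a prime and a_1, ..., a_n integers with a_n ≠ 0 and p > |a_1| + ... + |a_n|. Then the polynomial a_n x^n + ... + a_1 x - p is irreducible over Z. -/
/-! If `z` is a complex root with `‖z‖ ≤ 1`, then `p = |∑ aᵢ zⁱ⁺¹| ≤ ∑ |aᵢ| < p`; so every complex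
root of `f` lies outside the closed unit disc. A factorisation `f = g * h` gives
`g(0) * h(0) = -p`, so one factor, say `g`, has `g(0) = ±1`. Its roots are roots of `f`, and
`|g(0)| = |lead g| * ∏ |roots of g|` with `|lead g| ≥ 1` forces `g` to have no roots at all,
i.e. `g` is a constant `±1`. -/

open Polynomial

theorem norm_sum_mul_pow_le_sum_norm {𝕜 ι : Type*} [NormedRing 𝕜] [NormOneClass 𝕜]
    (s : Finset ι) (a : ι → 𝕜) (e : ι → ℕ) {z : 𝕜} (hz : ‖z‖ ≤ 1) :
    ‖∑ i ∈ s, a i * z ^ e i‖ ≤ ∑ i ∈ s, ‖a i‖ :=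
  (norm_sum_le _ _).trans <| Finset.sum_le_sum fun i _ => calc
    ‖a i * z ^ e i‖ ≤ ‖a i‖ * ‖z‖ ^ e i := (norm_mul_le _ _).trans <| by
        gcongr; exact norm_pow_le _ _
    _ ≤ ‖a i‖ := mul_le_of_le_one_right (norm_nonneg _) (pow_le_one₀ (norm_nonneg _) hz)

namespace Polynomial

theorem norm_coeff_zero_eq_norm_leadingCoeff_mul_prod_norm_roots (g : ℂ[X]) :
    ‖g.coeff 0‖ = ‖g.leadingCoeff‖ * (g.roots.map (‖·‖)).prod := by
  rw [(IsAlgClosed.splits g).coeff_zero_eq_leadingCoeff_mul_prod_roots, norm_mul, norm_mul,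
    norm_pow, norm_neg, norm_one, one_pow, one_mul]
  exact congrArg _ (map_multiset_prod (normHom : ℂ →*₀ ℝ) g.roots)

theorem natDegree_eq_zero_of_norm_coeff_zero_le_of_one_lt_norm_roots {g : ℂ[X]}
    (h0 : ‖g.coeff 0‖ ≤ ‖g.leadingCoeff‖) (hroots : ∀ z ∈ g.roots, 1 < ‖z‖) :
    g.natDegree = 0 := by
  by_contra hdeg
  have hlead : 0 < ‖g.leadingCoeff‖ := by
    simpa using fun h => hdeg (by simp [h])
  have hne : g.roots ≠ 0 := by
    rwa [← Multiset.card_pos, pos_iff_ne_zero, ← (IsAlgClosed.splits g).natDegree_eq_card_roots]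
  have hprod : 1 < (g.roots.map (‖·‖)).prod := by
    simpa using Multiset.prod_map_lt_prod_map hne (fun _ => (1 : ℝ)) _ (fun _ _ => one_pos) hroots
  rw [norm_coeff_zero_eq_norm_leadingCoeff_mul_prod_norm_roots] at h0
  nlinarith

theorem isUnit_of_dvd_of_isUnit_coeff_zero_of_one_lt_norm_roots {f g : ℤ[X]}
    (hroots : ∀ z : ℂ, aeval z f = 0 → 1 < ‖z‖) (hg : g ∣ f) (hg0 : IsUnit (g.coeff 0)) :
    IsUnit g := by
  set gC := g.map (Int.castRingHom ℂ)
  have hinj : Function.Injective (Int.castRingHom ℂ) := RingHom.injective_int _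
  have hgC0 : ‖gC.coeff 0‖ = 1 := by
    rcases Int.isUnit_iff.mp hg0 with h | h <;> simp [gC, coeff_map, h]
  have hgC_lead : 1 ≤ ‖gC.leadingCoeff‖ := by
    have hg_ne : g ≠ 0 := by rintro rfl; simp at hg0
    rw [leadingCoeff_map_of_injective hinj, eq_intCast, Complex.norm_intCast]
    exact_mod_cast Int.one_le_abs (leadingCoeff_ne_zero.mpr hg_ne)
  have hgC_roots : ∀ z ∈ gC.roots, 1 < ‖z‖ := fun z hz => hroots z <|
    aeval_eq_zero_of_dvd_aeval_eq_zero hg (by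
      simpa [aeval_def, eval₂_eq_eval_map] using (mem_roots'.mp hz).2)
  have hdeg := natDegree_eq_zero_of_norm_coeff_zero_le_of_one_lt_norm_roots
    (hgC0 ▸ hgC_lead) hgC_roots
  rw [natDegree_map_eq_of_injective hinj] at hdeg
  rw [eq_C_of_natDegree_eq_zero hdeg]
  exact hg0.map C

theorem irreducible_of_prime_coeff_zero_of_one_lt_norm_roots {f : ℤ[X]}
    (hprime : Prime (f.coeff 0)) (hroots : ∀ z : ℂ, aeval z f = 0 → 1 < ‖z‖) :
    Irreducible f where
  not_isUnit hf := hprime.not_isUnit (hf.map constantCoeff)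
  isUnit_or_isUnit g h hgh := by
    have hcoeff : g.coeff 0 * h.coeff 0 = f.coeff 0 := by rw [hgh, mul_coeff_zero]
    exact (hprime.irreducible.isUnit_or_isUnit hcoeff.symm).imp
      (isUnit_of_dvd_of_isUnit_coeff_zero_of_one_lt_norm_roots hroots ⟨h, hgh⟩)
      (isUnit_of_dvd_of_isUnit_coeff_zero_of_one_lt_norm_roots hroots
        ⟨g, hgh.trans (mul_comm _ _)⟩)

end Polynomial

theorem stmt_6_general (p : ℕ) (hp : p.Prime) (m : ℕ) (a : Fin (m + 1) → ℤ)
    (hdom : (p : ℤ) > ∑ i, |a i|)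
    (f : ℤ[X]) (hf : f = C (-(p : ℤ)) + ∑ i, C (a i) * X ^ ((i : ℕ) + 1)) :
    Irreducible f := by
  subst hf
  refine irreducible_of_prime_coeff_zero_of_one_lt_norm_roots ?_ fun z hz => ?_
  · simpa [finsetSum_coeff, coeff_C_mul_X_pow] using (Nat.prime_iff_prime_int.mp hp).neg
  · by_contra! hz_le
    have hp_eq : (p : ℂ) = ∑ i, (a i : ℂ) * z ^ ((i : ℕ) + 1) := by
      simp only [map_add, map_sum, map_mul, map_pow, aeval_X, eq_intCast, map_intCast] at hz
      push_cast at hz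
      linear_combination -hz
    have hp_le := norm_sum_mul_pow_le_sum_norm Finset.univ (fun i => (a i : ℂ))
      (fun i => (i : ℕ) + 1) hz_le
    rw [← hp_eq] at hp_le
    simp only [Complex.norm_natCast, Complex.norm_intCast] at hp_le
    have hdom_real : ((∑ i, |a i| : ℤ) : ℝ) < p := by exact_mod_cast hdom
    push_cast at hdom_real
    linarith

theorem stmt_6 (p : ℕ) (hp : p.Prime) (m : ℕ) (a : Fin (m + 1) → ℤ)
    (hlead : a (Fin.last m) ≠ 0)
    (hdom : (p : ℤ) > ∑ i, |a i|)
    (f : ℤ[X]) (hf : f = C (-(p : ℤ)) + ∑ i, C (a i) * X ^ ((i : ℕ) + 1)) :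
    Irreducible f :=
  stmt_6_general p hp m a hdom f hf
end

section
/- Let f(x) = a_{n_r}x^{n_r} + ... + a_{n_1}x^{n_1} + εp^u where p is prime, u ≥ 2, n_1 = 2, u not divisible by 2, ε = ±1, p ∤ a_{n_1}a_{n_r}, all a_{n_i} ≠ 0, and p^u > |a_{n_1}| + ... + |a_{n_r}|. Then f is irreducible over Z. -/
open Polynomial

private lemma aux_root (p u : ℕ) (ε : ℤ) (hε : ε = 1 ∨ ε = -1)
    (r : ℕ) (n : Fin (r + 1) → ℕ) (a : Fin (r + 1) → ℤ)
    (hdom : ((p : ℤ)) ^ u > ∑ i, |a i|)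
    (f : ℤ[X]) (hf : f = C (ε * (p : ℤ) ^ u) + ∑ i, C (a i) * X ^ (n i))
    (z : ℂ) (hz : (f.map (Int.castRingHom ℂ)).eval z = 0) : 1 < ‖z‖ := by
  by_contra hle
  push_neg at hle
  have hev : ((ε : ℂ) * (p:ℂ)^u) + ∑ i, (a i : ℂ) * z ^ (n i) = 0 := by
    rw [hf] at hz
    simpa [Polynomial.map_add, Polynomial.map_sum, eval_finset_sum] using hz
  have h1 : ‖(ε : ℂ) * (p:ℂ)^u‖ = (p:ℝ)^u := by
    rcases hε with rfl | rfl <;> simp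
  have h2 : ‖∑ i, (a i : ℂ) * z ^ (n i)‖ ≤ ∑ i, (|a i| : ℝ) := by
    refine (norm_sum_le _ _).trans (Finset.sum_le_sum fun i _ => ?_)
    rw [norm_mul, norm_pow]
    calc ‖(a i : ℂ)‖ * ‖z‖ ^ (n i) ≤ ‖(a i : ℂ)‖ * 1 := by
          apply mul_le_mul_of_nonneg_left _ (norm_nonneg _)
          exact pow_le_one₀ (norm_nonneg z) hle
      _ = (|a i| : ℝ) := by simp [Complex.norm_intCast]
  have h3 : (∑ i, (|a i| : ℝ)) < (p:ℝ)^u := by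
    have := hdom
    push_cast at this ⊢
    exact_mod_cast this
  have : (p:ℝ)^u ≤ ∑ i, (|a i| : ℝ) := by
    rw [← h1]
    have : (ε : ℂ) * (p:ℂ)^u = - ∑ i, (a i : ℂ) * z ^ (n i) := by linear_combination hev
    rw [this, norm_neg]; exact h2
  linarith

private lemma aux_factor (f g : ℤ[X])
    (hroot : ∀ z : ℂ, (f.map (Int.castRingHom ℂ)).eval z = 0 → 1 < ‖z‖)
    (hdvd : g ∣ f) (hdeg : 1 ≤ g.natDegree) : 1 < (g.coeff 0).natAbs := by
  have hgne : g ≠ 0 := fun h => by simp [h] at hdeg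
  set G : ℂ[X] := g.map (Int.castRingHom ℂ) with hG
  have hGne : G ≠ 0 := by
    exact (Polynomial.map_ne_zero_iff (f := Int.castRingHom ℂ) (fun x y h => by simpa using h)).mpr hgne
  have hsplit : Splits G := IsAlgClosed.splits G
  have hcard : G.roots.card = G.natDegree := (splits_iff_card_roots.mp hsplit)
  have hdegG : G.natDegree = g.natDegree :=
    natDegree_map_eq_of_injective (fun x y h => by simpa using h) g
  have hprod : G = C G.leadingCoeff * (G.roots.map fun z => X - C z).prod :=
    hsplit.eq_prod_roots
  have hr1 : ∀ z ∈ G.roots, 1 < ‖z‖ := by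
    intro z hz
    apply hroot
    have hz' : G.eval z = 0 := (mem_roots hGne).mp hz
    obtain ⟨q, hq⟩ := Polynomial.map_dvd (Int.castRingHom ℂ) hdvd
    rw [hq, eval_mul, hz', zero_mul]
  have he0 : ‖G.eval 0‖ = ‖G.leadingCoeff‖ * (G.roots.map fun z => ‖z‖).prod := by
    conv_lhs => rw [hprod]
    rw [eval_mul, eval_C, norm_mul, eval_multiset_prod, Multiset.map_map]
    congr 1
    rw [show ‖(Multiset.map (eval 0 ∘ fun z => X - C z) G.roots).prod‖
        = (normHom : ℂ →*₀ ℝ) (Multiset.map (eval 0 ∘ fun z => X - C z) G.roots).prod from rfl,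
      map_multiset_prod (normHom : ℂ →*₀ ℝ), Multiset.map_map]
    apply congrArg
    apply Multiset.map_congr rfl
    intro z _
    simp [normHom]
  have hne : G.roots ≠ 0 := by
    intro h0
    rw [h0] at hcard
    simp [hdegG] at hcard
    omega
  obtain ⟨z0, hz0⟩ := Multiset.exists_mem_of_ne_zero hne
  obtain ⟨rest, hrest⟩ := Multiset.exists_cons_of_mem hz0
  have hrest1 : (1:ℝ) ≤ (rest.map fun z => ‖z‖).prod := by
    apply Multiset.one_le_prod
    intro x hx
    obtain ⟨z, hz, rfl⟩ := Multiset.mem_map.mp hx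
    exact (hr1 z (hrest ▸ Multiset.mem_cons_of_mem hz)).le
  have hprodge : ‖z0‖ ≤ (G.roots.map fun z => ‖z‖).prod := by
    rw [hrest, Multiset.map_cons, Multiset.prod_cons]
    nlinarith [norm_nonneg z0, hr1 z0 hz0]
  have hlead : 1 ≤ ‖G.leadingCoeff‖ := by
    have : G.leadingCoeff = (g.leadingCoeff : ℂ) := by
      rw [hG, leadingCoeff, coeff_map, hdegG]; rfl
    rw [this, Complex.norm_intCast]
    have : g.leadingCoeff ≠ 0 := leadingCoeff_ne_zero.mpr hgne
    rw [← Int.cast_abs]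
    exact_mod_cast Int.one_le_abs this
  have h1 : 1 < ‖G.eval 0‖ := by
    rw [he0]
    calc (1:ℝ) < ‖z0‖ := hr1 z0 hz0
      _ ≤ (G.roots.map fun z => ‖z‖).prod := hprodge
      _ ≤ ‖G.leadingCoeff‖ * _ := by
          nlinarith [hprodge, hr1 z0 hz0, hlead]
  have : G.eval 0 = ((g.coeff 0 : ℤ) : ℂ) := by
    rw [hG, eval_map, eval₂_at_zero]; rfl
  rw [this, Complex.norm_intCast] at h1
  have := h1
  rw [← Int.cast_abs] at this
  have h2 : (1:ℤ) < |g.coeff 0| := by exact_mod_cast this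
  rw [Int.abs_eq_natAbs] at h2
  omega

private lemma aux_core (p u : ℕ) (hp : p.Prime) (hu2 : ¬ 2 ∣ u) (ε : ℤ) (hε : ε = 1 ∨ ε = -1)
    (g0 g1 g2 h0 h1 h2 a0 : ℤ)
    (hprod : g0 * h0 = ε * (p:ℤ)^u)
    (hg0 : 1 < g0.natAbs) (hh0 : 1 < h0.natAbs)
    (hc1 : g0 * h1 + g1 * h0 = 0)
    (hc2 : g0 * h2 + g1 * h1 + g2 * h0 = a0)
    (hpa0 : ¬ (p:ℤ) ∣ a0) : False := by
  have hppos : 1 < p := hp.one_lt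
  have habs : g0.natAbs * h0.natAbs = p ^ u := by
    have : (g0 * h0).natAbs = (ε * (p:ℤ)^u).natAbs := by rw [hprod]
    rwa [Int.natAbs_mul, Int.natAbs_mul,
      (by rcases hε with rfl | rfl <;> rfl : ε.natAbs = 1), one_mul,
      Int.natAbs_pow, Int.natAbs_natCast] at this
  obtain ⟨s, hs, hgs⟩ := (Nat.dvd_prime_pow hp).mp ⟨h0.natAbs, habs.symm⟩
  obtain ⟨t, ht, hht⟩ := (Nat.dvd_prime_pow hp).mp
    ⟨g0.natAbs, by rw [← habs, mul_comm]⟩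
  have hst : s + t = u := by
    have : p ^ (s + t) = p ^ u := by rw [pow_add, ← hgs, ← hht, habs]
    exact Nat.pow_right_injective hppos this
  have hs1 : 1 ≤ s := by
    rcases Nat.eq_zero_or_pos s with h | h
    · rw [h, pow_zero] at hgs; omega
    · exact h
  have ht1 : 1 ≤ t := by
    rcases Nat.eq_zero_or_pos t with h | h
    · rw [h, pow_zero] at hht; omega
    · exact h
  have hd : ∀ z : ℤ, p ∣ z.natAbs → (p:ℤ) ∣ z := fun z h =>
    Int.natAbs_dvd_natAbs.mp (by rwa [Int.natAbs_natCast])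
  have hpg0 : (p:ℤ) ∣ g0 := hd _ (hgs ▸ dvd_pow_self p (by omega))
  have hph0 : (p:ℤ) ∣ h0 := hd _ (hht ▸ dvd_pow_self p (by omega))
  have hp11 : ¬ (p:ℤ) ∣ g1 * h1 := by
    intro hdvd
    apply hpa0
    rw [← hc2]
    exact dvd_add (dvd_add (Dvd.dvd.mul_right hpg0 h2) hdvd) (Dvd.dvd.mul_left hph0 g2)
  have hpg1 : ¬ p ∣ g1.natAbs := fun h => hp11 ((hd _ h).mul_right h1)
  have hph1 : ¬ p ∣ h1.natAbs := fun h => hp11 ((hd _ h).mul_left g1)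
  have hkey : p ^ s * h1.natAbs = g1.natAbs * p ^ t := by
    have h1' : g0 * h1 = -(g1 * h0) := by linarith
    have := congrArg Int.natAbs h1'
    rwa [Int.natAbs_mul, Int.natAbs_neg, Int.natAbs_mul, hgs, hht] at this
  have hcl : ∀ s' t' x y : ℕ, s' < t' → p ^ s' * x = y * p ^ t' → p ∣ x := by
    intro s' t' x y hlt heq
    have : p ^ s' * p ∣ p ^ s' * x := by
      rw [heq, ← pow_succ]
      exact (pow_dvd_pow p (by omega)).mul_left y
    exact ((Nat.mul_dvd_mul_iff_left (Nat.pow_pos (n := s') (by omega))).mp this)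
  have hstt : s = t := by
    by_contra hne
    rcases Nat.lt_or_ge s t with hlt | hge
    · exact hph1 (hcl s t _ _ hlt hkey)
    · exact hpg1 (hcl t s _ _ (by omega) (by rw [mul_comm, ← hkey, mul_comm]))
  apply hu2
  omega

theorem stmt_8 (p u : ℕ) (hp : p.Prime) (hu : 2 ≤ u) (ε : ℤ) (hε : ε = 1 ∨ ε = -1)
    (r : ℕ) (n : Fin (r + 1) → ℕ) (a : Fin (r + 1) → ℤ)
    (hmono : StrictMono n) (hn1 : n 0 = 2) (hu2 : ¬ 2 ∣ u)
    (hpa : ¬ (p : ℤ) ∣ a 0 * a (Fin.last r))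
    (ha : ∀ i, a i ≠ 0)
    (hdom : ((p : ℤ)) ^ u > ∑ i, |a i|)
    (f : ℤ[X]) (hf : f = C (ε * (p : ℤ) ^ u) + ∑ i, C (a i) * X ^ (n i)) :
    Irreducible f := by
  have hge : ∀ i, 2 ≤ n i := fun i => hn1 ▸ hmono.monotone (Fin.zero_le i)
  set c : ℤ := ε * (p:ℤ)^u with hcdef
  have hcs : ∀ k, f.coeff k = (C c).coeff k + ∑ i, if k = n i then a i else 0 := by
    intro k
    rw [hf, coeff_add, finset_sum_coeff]
    congr 1; apply Finset.sum_congr rfl; intro i _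
    rw [coeff_C_mul, coeff_X_pow, mul_ite, mul_one, mul_zero]
  have hz : ∀ k, k < 2 → (∑ i, if k = n i then a i else (0:ℤ)) = 0 := by
    intro k hk
    exact Finset.sum_eq_zero (fun i _ => by rw [if_neg]; have := hge i; omega)
  have hc0 : f.coeff 0 = c := by
    rw [hcs 0, hz 0 (by norm_num), coeff_C, if_pos rfl, add_zero]
  have hc1 : f.coeff 1 = 0 := by
    rw [hcs 1, hz 1 (by norm_num), coeff_C, if_neg (by norm_num : (1:ℕ) ≠ 0), add_zero]
  have hc2 : f.coeff 2 = a 0 := by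
    rw [hcs 2, coeff_C, if_neg (by norm_num : (2:ℕ) ≠ 0), zero_add]
    rw [Finset.sum_eq_single 0]
    · rw [hn1, if_pos rfl]
    · intro i _ hi
      have : n 0 < n i := hmono (Fin.pos_of_ne_zero hi)
      rw [if_neg]; omega
    · simp
  have hpa0 : ¬ (p:ℤ) ∣ a 0 := fun h => hpa (h.mul_right _)
  have hcne : c ≠ 0 := by
    rcases hε with rfl | rfl <;>
      simp [hcdef, pow_eq_zero_iff, hp.ne_zero]
  have hfne : f ≠ 0 := fun h => hcne (by rw [← hc0, h, coeff_zero])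
  have hroot := aux_root p u ε hε r n a hdom f (hcdef ▸ hf)
  constructor
  · intro hunit
    have hdeg : f.natDegree = 0 := natDegree_eq_zero_of_isUnit hunit
    have : f.coeff 2 = 0 := coeff_eq_zero_of_natDegree_lt (by omega)
    exact ha 0 (by rw [← hc2, this])
  · intro g h hgh
    have e0 : g.coeff 0 * h.coeff 0 = c := by
      rw [← hc0, hgh, mul_coeff_zero]
    -- constant factor cases
    have hconst : ∀ q q' : ℤ[X], f = q * q' → q.natDegree = 0 → IsUnit q := by
      intro q q' hqq hq0
      have hq : q = C (q.coeff 0) := eq_C_of_natDegree_eq_zero hq0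
      have hco : ∀ k, f.coeff k = q.coeff 0 * q'.coeff k := by
        intro k
        conv_lhs => rw [hqq, hq]
        rw [coeff_C_mul]
      have hdc : q.coeff 0 ∣ c := ⟨q'.coeff 0, by rw [← hc0, hco 0]⟩
      have hda : q.coeff 0 ∣ a 0 := ⟨q'.coeff 2, by rw [← hc2, hco 2]⟩
      have hnat : (q.coeff 0).natAbs ∣ p ^ u := by
        have := Int.natAbs_dvd_natAbs.mpr hdc
        rwa [hcdef, Int.natAbs_mul, (by rcases hε with rfl | rfl <;> rfl : ε.natAbs = 1),
          one_mul, Int.natAbs_pow, Int.natAbs_natCast] at this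
      obtain ⟨k, hk, hdk⟩ := (Nat.dvd_prime_pow hp).mp hnat
      rcases Nat.eq_zero_or_pos k with hk0 | hk0
      · rw [hq]
        rw [hk0, pow_zero] at hdk
        exact (isUnit_C).mpr (Int.isUnit_iff_natAbs_eq.mpr hdk)
      · exfalso
        apply hpa0
        refine dvd_trans ?_ hda
        exact Int.natAbs_dvd_natAbs.mp (by rw [Int.natAbs_natCast, hdk]; exact dvd_pow_self p (by omega))
    rcases Nat.eq_zero_or_pos g.natDegree with hg | hg
    · exact Or.inl (hconst g h hgh hg)
    rcases Nat.eq_zero_or_pos h.natDegree with hh | hh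
    · exact Or.inr (hconst h g (by rw [hgh, mul_comm]) hh)
    exfalso
    have hgdvd : g ∣ f := ⟨h, hgh⟩
    have hhdvd : h ∣ f := ⟨g, by rw [hgh, mul_comm]⟩
    have hg0 := aux_factor f g hroot hgdvd hg
    have hh0 := aux_factor f h hroot hhdvd hh
    have e1 : g.coeff 0 * h.coeff 1 + g.coeff 1 * h.coeff 0 = 0 := by
      rw [← hc1, hgh, coeff_mul, Finset.Nat.sum_antidiagonal_eq_sum_range_succ_mk]
      simp [Finset.sum_range_succ]
    have e2 : g.coeff 0 * h.coeff 2 + g.coeff 1 * h.coeff 1 + g.coeff 2 * h.coeff 0 = a 0 := by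
      rw [← hc2, hgh, coeff_mul, Finset.Nat.sum_antidiagonal_eq_sum_range_succ_mk]
      simp [Finset.sum_range_succ]
    exact aux_core p u hp hu2 ε hε (g.coeff 0) (g.coeff 1) (g.coeff 2)
      (h.coeff 0) (h.coeff 1) (h.coeff 2) (a 0) e0 hg0 hh0 e1 e2 hpa0
end

section
/- Let f(x) = a_{n_r}x^{n_r} + ... + a_{n_1}x^{n_1} + εp^u where p is prime, u ≥ 2 not divisible by 3, the smallest positive exponent n_1 = 3, ε = ±1, p ∤ a_{n_1}a_{n_r}, all a_{n_i} ≠ 0, and p^u > |a_{n_1}| + ... + |a_{n_r}|. Then f is irreducible over Z. -/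
/-!
Since `p ^ u` exceeds `∑ i, |a i|`, every complex root of `f` lies outside the closed unit disc. A
nonconstant integer factor `g` of `f` has `g(0) = ± lc(g) · ∏ roots`, hence `|g(0)| > 1`; as
`g(0)` divides `f(0) = ±p ^ u`, it is divisible by `p`. Since `p ∤ a 0` and `f(0) = ±p ^ u`, `f`
is primitive, so a nontrivial factorization is `f = g h` with both factors nonconstant and
`p ∣ g₀, h₀`.

The coefficients of `x` and `x²` in `f` vanish and that of `x³` is prime to `p`. So, up to
swapping the factors, `p ∤ g₁`, then `p ∣ h₁` (coefficient of `x²` mod `p`) and `p ∤ h₂`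
(coefficient of `x³` mod `p`). Put `v = v_p(g₀)` and `t = v_p(h₁)`. The coefficient of `x` gives
`v_p(h₀) = v + t`. The coefficient of `x²` is a sum of terms of valuations `v`, `t` and
`≥ v + t`; since it vanishes, its two smallest valuations agree, so `v = t` and
`u = v_p(g₀ h₀) = 3v`, contradicting `3 ∤ u`.
-/

open Polynomial

theorem one_lt_norm_of_add_sum_eq_zero {K ι : Type*} [NormedDivisionRing K] (s : Finset ι)
    (c : K) (a : ι → K) (n : ι → ℕ) (hc : ∑ i ∈ s, ‖a i‖ < ‖c‖) {z : K}
    (hz : c + ∑ i ∈ s, a i * z ^ n i = 0) : 1 < ‖z‖ := by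
  by_contra! hz1
  have hc' : c = -∑ i ∈ s, a i * z ^ n i := eq_neg_of_add_eq_zero_left hz
  refine hc.not_ge ?_
  calc ‖c‖ = ‖∑ i ∈ s, a i * z ^ n i‖ := by rw [hc', norm_neg]
    _ ≤ ∑ i ∈ s, ‖a i‖ * ‖z‖ ^ n i := by
        simpa only [norm_mul, norm_pow] using norm_sum_le s fun i => a i * z ^ n i
    _ ≤ ∑ i ∈ s, ‖a i‖ := Finset.sum_le_sum fun i _ =>
        mul_le_of_le_one_right (norm_nonneg _) (pow_le_one₀ (norm_nonneg _) hz1)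

theorem Polynomial.one_lt_norm_of_aeval_C_add_sum_eq_zero {ι : Type*} (s : Finset ι) (c : ℤ)
    (a : ι → ℤ) (n : ι → ℕ) (hc : ∑ i ∈ s, |a i| < |c|) {z : ℂ}
    (hz : aeval z (C c + ∑ i ∈ s, C (a i) * X ^ n i) = 0) : 1 < ‖z‖ := by
  refine one_lt_norm_of_add_sum_eq_zero s (c : ℂ) (fun i => (a i : ℂ)) n ?_ ?_
  · simp only [Complex.norm_intCast]
    exact_mod_cast hc
  · simpa using hz

theorem Polynomial.norm_leadingCoeff_lt_norm_coeff_zero {K : Type*} [NormedField K]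
    [IsAlgClosed K] {g : K[X]} (hg : g.natDegree ≠ 0) (hroots : ∀ z ∈ g.roots, 1 < ‖z‖) :
    ‖g.leadingCoeff‖ < ‖g.coeff 0‖ := by
  have hsplit := IsAlgClosed.splits g
  obtain ⟨z, hz⟩ : ∃ z, z ∈ g.roots :=
    Multiset.card_pos_iff_exists_mem.mp (hsplit.natDegree_eq_card_roots ▸ Nat.pos_of_ne_zero hg)
  obtain ⟨s, hs⟩ := Multiset.exists_cons_of_mem hz
  have hlc : 0 < ‖g.leadingCoeff‖ := by
    refine norm_pos_iff.mpr (leadingCoeff_ne_zero.mpr ?_)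
    rintro rfl
    exact hg natDegree_zero
  have hs1 : 1 ≤ ‖s.prod‖ := by
    rw [← normHom_apply, map_multiset_prod]
    exact Multiset.one_le_prod_map fun w hw => (hroots w (hs ▸ Multiset.mem_cons_of_mem hw)).le
  rw [hsplit.coeff_zero_eq_leadingCoeff_mul_prod_roots, hs, Multiset.prod_cons]
  simp only [norm_mul, norm_pow, norm_neg, norm_one, one_pow, one_mul]
  exact lt_mul_of_one_lt_right hlc (one_lt_mul_of_lt_of_le (hroots z hz) hs1)

theorem Polynomial.one_lt_abs_coeff_zero_of_dvd {f g : ℤ[X]} (hgf : g ∣ f) (hg : g.natDegree ≠ 0)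
    (hroots : ∀ z : ℂ, aeval z f = 0 → 1 < ‖z‖) : 1 < |g.coeff 0| := by
  have hinj : Function.Injective (Int.castRingHom ℂ) := Int.cast_injective
  have hg₀ : g ≠ 0 := by rintro rfl; exact hg natDegree_zero
  have key := norm_leadingCoeff_lt_norm_coeff_zero (g := g.map (Int.castRingHom ℂ))
    (by rwa [natDegree_map_eq_of_injective hinj]) fun z hz => hroots z ?_
  · rw [leadingCoeff_map_of_injective hinj, coeff_map, eq_intCast, eq_intCast,
      Complex.norm_intCast, Complex.norm_intCast] at key
    exact (Int.one_le_abs (leadingCoeff_ne_zero.mpr hg₀)).trans_lt (by exact_mod_cast key)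
  · rw [mem_roots_map_of_injective hinj hg₀] at hz
    obtain ⟨k, rfl⟩ := hgf
    rw [aeval_def, algebraMap_int_eq, eval₂_mul, hz, zero_mul]

theorem Prime.dvd_of_dvd_pow_of_not_isUnit {M : Type*} [CommMonoidWithZero M] [IsCancelMulZero M]
    {p x : M} (hp : Prime p) {n : ℕ} (hx : x ∣ p ^ n) (hxu : ¬ IsUnit x) : p ∣ x := by
  obtain ⟨i, -, hi⟩ := (dvd_prime_pow hp n).mp hx
  rcases Nat.eq_zero_or_pos i with rfl | hi₀
  · exact absurd (hi.isUnit_iff.mpr (by rw [pow_zero]; exact isUnit_one)) hxu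
  · exact (dvd_pow_self p hi₀.ne').trans hi.symm.dvd

theorem Polynomial.prime_dvd_coeff_zero_of_dvd {p : ℤ} (hp : Prime p) {n : ℕ} {f g : ℤ[X]}
    (hf₀ : f.coeff 0 ∣ p ^ n) (hroots : ∀ z : ℂ, aeval z f = 0 → 1 < ‖z‖) (hgf : g ∣ f)
    (hg : g.natDegree ≠ 0) : p ∣ g.coeff 0 := by
  obtain ⟨k, rfl⟩ := hgf
  have hg₀ : g.coeff 0 ∣ (g * k).coeff 0 := ⟨k.coeff 0, mul_coeff_zero g k⟩
  refine hp.dvd_of_dvd_pow_of_not_isUnit (hg₀.trans hf₀) fun hu => ?_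
  exact (one_lt_abs_coeff_zero_of_dvd (dvd_mul_right g k) hg hroots).ne' (Int.isUnit_iff_abs_eq.mp hu)

theorem min_emultiplicity_le_of_add_add_eq_zero {R : Type*} [Ring R] {p a b c : R}
    (h : a + b + c = 0) :
    min (emultiplicity p b) (emultiplicity p c) ≤ emultiplicity p a := by
  rw [add_assoc] at h
  rw [eq_neg_of_add_eq_zero_left h, emultiplicity_neg]
  exact min_le_emultiplicity_add

theorem three_dvd_of_emultiplicity_mul_eq {R : Type*} [CommRing R] [IsDomain R]
    {p g₀ g₁ g₂ h₀ h₁ h₂ : R} (hp : Prime p)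
    (e₁ : g₀ * h₁ + g₁ * h₀ = 0) (e₂ : g₀ * h₂ + g₁ * h₁ + g₂ * h₀ = 0)
    (hg₀ : p ∣ g₀) (hg₁ : ¬ p ∣ g₁) (hh₁ : p ∣ h₁) (hh₂ : ¬ p ∣ h₂) {u : ℕ}
    (hu : emultiplicity p (g₀ * h₀) = u) : 3 ∣ u := by
  have one_le {x : R} (hx : p ∣ x) : ((1 : ℕ) : ℕ∞) ≤ emultiplicity p x :=
    pow_dvd_iff_le_emultiplicity.mp (by rwa [pow_one])
  have hv₁ := one_le hg₀
  have ht₁ := one_le hh₁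
  have hw : emultiplicity p g₀ + emultiplicity p h₁ = emultiplicity p h₀ := by
    rw [← emultiplicity_mul hp, eq_neg_of_add_eq_zero_left e₁, emultiplicity_neg,
      emultiplicity_mul hp, emultiplicity_eq_zero.mpr hg₁, zero_add]
  have hmin₀ := min_emultiplicity_le_of_add_add_eq_zero (p := p) e₂
  have hmin₁ := min_emultiplicity_le_of_add_add_eq_zero (p := p)
    (show g₁ * h₁ + g₀ * h₂ + g₂ * h₀ = 0 by linear_combination e₂)
  have hX : emultiplicity p h₀ ≤ emultiplicity p (g₂ * h₀) :=
    emultiplicity_le_emultiplicity_of_dvd_right (dvd_mul_left _ _)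
  generalize emultiplicity p (g₂ * h₀) = X at hmin₀ hmin₁ hX
  simp only [emultiplicity_mul hp, emultiplicity_eq_zero.mpr hg₁, emultiplicity_eq_zero.mpr hh₂,
    zero_add, add_zero, ← hw] at hmin₀ hmin₁ hX hu
  clear hw
  generalize emultiplicity p g₀ = v at *
  generalize emultiplicity p h₁ = t at *
  induction v using ENat.recTopCoe <;> induction t using ENat.recTopCoe <;>
    induction X using ENat.recTopCoe
  all_goals simp_all
  all_goals norm_cast at *; omega

theorem Polynomial.three_dvd_of_emultiplicity_coeff_zero_mul {R : Type*} [CommRing R] [IsDomain R]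
    {p : R} (hp : Prime p) {g h : R[X]} (h₁ : (g * h).coeff 1 = 0) (h₂ : (g * h).coeff 2 = 0)
    (h₃ : ¬ p ∣ (g * h).coeff 3) (hg₀ : p ∣ g.coeff 0) (hh₀ : p ∣ h.coeff 0) {u : ℕ}
    (hu : emultiplicity p ((g * h).coeff 0) = u) : 3 ∣ u := by
  have e₁ (g h : R[X]) : (g * h).coeff 1 = g.coeff 0 * h.coeff 1 + g.coeff 1 * h.coeff 0 := by
    simp [coeff_mul, Finset.Nat.antidiagonal_succ]
  have e₂ (g h : R[X]) : (g * h).coeff 2 =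
      g.coeff 0 * h.coeff 2 + g.coeff 1 * h.coeff 1 + g.coeff 2 * h.coeff 0 := by
    simp [coeff_mul, Finset.Nat.antidiagonal_succ]
    ring
  have e₃ (g h : R[X]) : (g * h).coeff 3 = g.coeff 0 * h.coeff 3 + g.coeff 1 * h.coeff 2 +
      g.coeff 2 * h.coeff 1 + g.coeff 3 * h.coeff 0 := by
    simp [coeff_mul, Finset.Nat.antidiagonal_succ]
    ring
  wlog hg₁ : ¬ p ∣ g.coeff 1 generalizing g h
  · have hh₁ : ¬ p ∣ h.coeff 1 := fun hh₁ => h₃ <| by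
      rw [e₃]
      exact dvd_add (dvd_add (dvd_add (hg₀.mul_right _) ((not_not.mp hg₁).mul_right _))
        (hh₁.mul_left _)) (hh₀.mul_left _)
    rw [mul_comm] at h₁ h₂ h₃ hu
    exact this h₁ h₂ h₃ hh₀ hg₀ hu hh₁
  have hh₁ : p ∣ h.coeff 1 := by
    refine (hp.dvd_or_dvd ?_).resolve_left hg₁
    rw [show g.coeff 1 * h.coeff 1 = -(g.coeff 0 * h.coeff 2 + g.coeff 2 * h.coeff 0) by
      linear_combination (e₂ g h).symm.trans h₂]
    exact (dvd_add (hg₀.mul_right _) (hh₀.mul_left _)).neg_right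
  have hh₂ : ¬ p ∣ h.coeff 2 := fun hh₂ => h₃ <| by
    rw [e₃]
    exact dvd_add (dvd_add (dvd_add (hg₀.mul_right _) (hh₂.mul_left _)) (hh₁.mul_left _))
      (hh₀.mul_left _)
  exact three_dvd_of_emultiplicity_mul_eq hp (by rw [← e₁, h₁]) (by rw [← e₂, h₂]) hg₀ hg₁ hh₁ hh₂
    (by rwa [mul_coeff_zero] at hu)

theorem Polynomial.isPrimitive_of_isCoprime_coeff {R : Type*} [CommSemiring R] {f : R[X]}
    {i j : ℕ} (h : IsCoprime (f.coeff i) (f.coeff j)) : f.IsPrimitive := fun r hr =>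
  h.isUnit_of_dvd' ((C_dvd_iff_dvd_coeff r f).mp hr i) ((C_dvd_iff_dvd_coeff r f).mp hr j)

theorem Polynomial.IsPrimitive.irreducible_of_forall_mul_eq {R : Type*} [CommRing R] [IsDomain R]
    {f : R[X]} (hf : f.IsPrimitive) (hdeg : f.natDegree ≠ 0)
    (hfac : ∀ g h : R[X], f = g * h → g.natDegree ≠ 0 → h.natDegree ≠ 0 → False) :
    Irreducible f := by
  have isUnit_of_natDegree_eq_zero {g h : R[X]} (e : f = g * h) (hg : g.natDegree = 0) :
      IsUnit g := by
    rw [eq_C_of_natDegree_eq_zero hg] at e ⊢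
    exact isUnit_C.mpr (hf _ ⟨h, e⟩)
  refine ⟨fun hu => hdeg (natDegree_eq_zero_of_isUnit hu), fun g h e => ?_⟩
  by_contra! hgh
  exact hfac g h e (fun hg => hgh.1 (isUnit_of_natDegree_eq_zero e hg))
    (fun hh => hgh.2 (isUnit_of_natDegree_eq_zero (e.trans (mul_comm g h)) hh))

theorem Polynomial.coeff_C_add_sum_C_mul_X_pow_of_ne {R ι : Type*} [Semiring R] (s : Finset ι)
    (c : R) (a : ι → R) (n : ι → ℕ) {k : ℕ} (hk : ∀ i ∈ s, n i ≠ k) :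
    (C c + ∑ i ∈ s, C (a i) * X ^ n i).coeff k = (C c).coeff k := by
  rw [coeff_add, finsetSum_coeff, Finset.sum_eq_zero fun i hi => ?_, add_zero]
  rw [coeff_C_mul_X_pow, if_neg (hk i hi).symm]

theorem Polynomial.coeff_C_add_sum_C_mul_X_pow_self {R ι : Type*} [Semiring R] [Fintype ι]
    (c : R) (a : ι → R) {n : ι → ℕ} (hn : Function.Injective n) {j : ι} (hj : n j ≠ 0) :
    (C c + ∑ i, C (a i) * X ^ n i).coeff (n j) = a j := by
  rw [coeff_add, coeff_C, if_neg hj, zero_add, finsetSum_coeff,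
    Finset.sum_eq_single j (fun i _ hij => ?_) (by simp), coeff_C_mul_X_pow, if_pos rfl]
  rw [coeff_C_mul_X_pow, if_neg (hn.ne hij).symm]

theorem stmt_9_general (p u : ℕ) (hp : p.Prime) (ε : ℤ) (hε : ε = 1 ∨ ε = -1)
    (r : ℕ) (n : Fin (r + 1) → ℕ) (a : Fin (r + 1) → ℤ)
    (hmono : StrictMono n) (hn1 : n 0 = 3) (hu3 : ¬ 3 ∣ u)
    (hpa : ¬ (p : ℤ) ∣ a 0 * a (Fin.last r))
    (hdom : ((p : ℤ)) ^ u > ∑ i, |a i|)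
    (f : ℤ[X]) (hf : f = C (ε * (p : ℤ) ^ u) + ∑ i, C (a i) * X ^ (n i)) :
    Irreducible f := by
  have hp' : Prime (p : ℤ) := Nat.prime_iff_prime_int.mp hp
  have hε' : IsUnit ε := Int.isUnit_iff.mpr hε
  have hpa₀ : ¬ (p : ℤ) ∣ a 0 := fun h => hpa (h.mul_right _)
  have hlow {k : ℕ} (hk : k < 3) : f.coeff k = (C (ε * (p : ℤ) ^ u)).coeff k :=
    hf ▸ coeff_C_add_sum_C_mul_X_pow_of_ne _ _ _ _ fun i _ =>
      (hk.trans_le (hn1 ▸ hmono.monotone (Fin.zero_le i))).ne'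
  have hf₀ : f.coeff 0 = ε * (p : ℤ) ^ u := (hlow (by norm_num)).trans coeff_C_zero
  have hf₁₂ {k : ℕ} (hk₀ : k ≠ 0) (hk : k < 3) : f.coeff k = 0 :=
    (hlow hk).trans (coeff_C_of_ne_zero hk₀)
  have hf₃ : f.coeff 3 = a 0 :=
    hf ▸ hn1 ▸ coeff_C_add_sum_C_mul_X_pow_self _ _ hmono.injective (by omega)
  have hroots (z : ℂ) (hz : aeval z f = 0) : 1 < ‖z‖ := by
    refine one_lt_norm_of_aeval_C_add_sum_eq_zero _ _ _ _ ?_ (hf ▸ hz)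
    rcases hε with rfl | rfl <;> simpa using hdom
  have hp_dvd {g h : ℤ[X]} (e : f = g * h) (hg : g.natDegree ≠ 0) : (p : ℤ) ∣ g.coeff 0 :=
    prime_dvd_coeff_zero_of_dvd hp' (hf₀ ▸ (hε'.mul_left_dvd).mpr dvd_rfl) hroots ⟨h, e⟩ hg
  have hν : emultiplicity (p : ℤ) (f.coeff 0) = u := by
    rw [hf₀, emultiplicity_mul hp', emultiplicity_of_isUnit_right hp'.not_isUnit hε',
      emultiplicity_pow_self_of_prime hp', zero_add]
  refine (isPrimitive_of_isCoprime_coeff (i := 0) (j := 3) ?_).irreducible_of_forall_mul_eq ?_ ?_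
  · rw [hf₀, hf₃]
    exact (isCoprime_mul_unit_left_left hε' _ _).mpr (hp'.coprime_iff_not_dvd.mpr hpa₀).pow_left
  · intro h
    exact hpa₀ (hf₃ ▸ coeff_eq_zero_of_natDegree_lt (p := f) (n := 3) (by omega) ▸ dvd_zero _)
  · rintro g h e hg hh
    exact hu3 (three_dvd_of_emultiplicity_coeff_zero_mul hp' (e ▸ hf₁₂ one_ne_zero (by norm_num))
      (e ▸ hf₁₂ two_ne_zero (by norm_num)) (e ▸ hf₃ ▸ hpa₀) (hp_dvd e hg)
      (hp_dvd (e.trans (mul_comm g h)) hh) (e ▸ hν))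

theorem stmt_9 (p u : ℕ) (hp : p.Prime) (hu : 2 ≤ u) (ε : ℤ) (hε : ε = 1 ∨ ε = -1)
    (r : ℕ) (n : Fin (r + 1) → ℕ) (a : Fin (r + 1) → ℤ)
    (hmono : StrictMono n) (hn1 : n 0 = 3) (hu3 : ¬ 3 ∣ u)
    (hpa : ¬ (p : ℤ) ∣ a 0 * a (Fin.last r))
    (ha : ∀ i, a i ≠ 0)
    (hdom : ((p : ℤ)) ^ u > ∑ i, |a i|)
    (f : ℤ[X]) (hf : f = C (ε * (p : ℤ) ^ u) + ∑ i, C (a i) * X ^ (n i)) :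
    Irreducible f :=
  stmt_9_general p u hp ε hε r n a hmono hn1 hu3 hpa hdom f hf
end

section
/- Let f(x) = a_{n_r}x^{n_r} + ... + a_{n_1}x^{n_1} + a_0 ∈ Z[x] with all a_{n_i} ≠ 0, a_0 ≠ 0 and |a_0| = |a_{n_1}| + ... + |a_{n_r}|. If ζ is a root of unity with f(ζ) = 0, then ζ^{n_i} = −sgn(a_0 a_{n_i}) for every i = 1, ..., r; consequently f_c(x) := gcd(x^{n_1} + sgn(a_0 a_{n_1}), ..., x^{n_r} + sgn(a_0 a_{n_r})) divides f(x). -/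
/-!
Multiply the relation `a₀ + ∑ aᵢ ζ^{nᵢ} = 0` by `-a₀`: the numbers `wᵢ = -a₀ aᵢ ζ^{nᵢ}` have
`|wᵢ| = |a₀ aᵢ|` and sum to `a₀² = |a₀| ∑ |aᵢ| = ∑ |wᵢ|`, so the triangle inequality is an equality
and every `wᵢ` is the positive real `|a₀ aᵢ|`, i.e. `ζ^{nᵢ} = -sgn(a₀ aᵢ)`. The divisibility does not
even need `ζ`: since `∑ aᵢ sgn(a₀ aᵢ) = sgn(a₀) ∑ |aᵢ| = a₀`, the polynomial is
`f = ∑ aᵢ (x^{nᵢ} + sgn(a₀ aᵢ))`, a combination of the polynomials whose gcd is taken.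
-/

open Polynomial ComplexOrder

theorem Complex.eq_norm_of_sum_eq_sum_norm {ι : Type*} {s : Finset ι} {z : ι → ℂ}
    (h : ∑ i ∈ s, z i = ∑ i ∈ s, (‖z i‖ : ℂ)) : ∀ i ∈ s, z i = ‖z i‖ := by
  have hre : ∑ i ∈ s, (z i).re = ∑ i ∈ s, ‖z i‖ := by
    simpa only [Complex.re_sum, Complex.ofReal_re] using congrArg Complex.re h
  intro i hi
  have hnonneg : 0 ≤ z i := Complex.re_eq_norm.mp <|
    (Finset.sum_eq_sum_iff_of_le fun j _ => Complex.re_le_norm (z j)).mp hre i hi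
  rw [← Complex.re_eq_norm.mpr hnonneg]
  exact Complex.eq_re_of_ofReal_le hnonneg

theorem eq_neg_sign_of_add_sum_eq_zero {ι : Type*} {s : Finset ι} {a : ι → ℤ} {a₀ : ℤ}
    {u : ι → ℂ} (ha₀ : a₀ ≠ 0) (ha : ∀ i ∈ s, a i ≠ 0) (heq : |a₀| = ∑ i ∈ s, |a i|)
    (hu : ∀ i ∈ s, ‖u i‖ = 1) (hsum : a₀ + ∑ i ∈ s, a i * u i = 0) :
    ∀ i ∈ s, u i = -((a₀ * a i).sign : ℂ) := by
  set w : ι → ℂ := fun i => -(a₀ * a i : ℂ) * u i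
  have hnorm : ∀ i ∈ s, (‖w i‖ : ℂ) = |a₀ * a i| := by
    intro i hi
    simp [w, hu i hi, abs_mul, ← Int.cast_abs]
  have hw : ∑ i ∈ s, w i = ∑ i ∈ s, (‖w i‖ : ℂ) := by
    rw [Finset.sum_congr rfl hnorm]
    calc ∑ i ∈ s, w i = -a₀ * ∑ i ∈ s, a i * u i := by
          simp only [w, Finset.mul_sum]; exact Finset.sum_congr rfl fun i _ => by ring
      _ = ((|a₀| * ∑ i ∈ s, |a i| : ℤ) : ℂ) := by
          rw [← heq, abs_mul_abs_self]; push_cast; linear_combination (-a₀ : ℂ) * hsum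
      _ = ∑ i ∈ s, ((|a₀ * a i| : ℤ) : ℂ) := by push_cast [Finset.mul_sum, abs_mul]; rfl
  intro i hi
  have hprod : ((a₀ * a i : ℤ) : ℂ) ≠ 0 := by exact_mod_cast mul_ne_zero ha₀ (ha i hi)
  apply mul_left_cancel₀ hprod
  have hwi := (Complex.eq_norm_of_sum_eq_sum_norm hw i hi).trans (hnorm i hi)
  rw [← Int.sign_mul_self_eq_abs] at hwi
  push_cast at hwi ⊢
  linear_combination -hwi

theorem Int.sum_mul_sign_mul_eq_of_abs_eq_sum {ι : Type*} {s : Finset ι} {a : ι → ℤ} {a₀ : ℤ}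
    (heq : |a₀| = ∑ i ∈ s, |a i|) : ∑ i ∈ s, a i * (a₀ * a i).sign = a₀ := by
  calc ∑ i ∈ s, a i * (a₀ * a i).sign = a₀.sign * ∑ i ∈ s, |a i| := by
        rw [Finset.mul_sum]
        refine Finset.sum_congr rfl fun i _ => ?_
        rw [Int.sign_mul, ← Int.sign_mul_self_eq_abs]; ring
    _ = a₀ := by rw [← heq, Int.sign_mul_abs]

theorem Polynomial.C_add_sum_eq_sum_mul_X_pow_add_sign {R ι : Type*} [CommRing R]
    {s : Finset ι} {a : ι → ℤ} {a₀ : ℤ} (n : ι → ℕ) (heq : |a₀| = ∑ i ∈ s, |a i|) :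
    C (a₀ : R) + ∑ i ∈ s, C (a i : R) * X ^ n i =
      ∑ i ∈ s, C (a i : R) * (X ^ n i + C ((a₀ * a i).sign : R)) := by
  simp only [mul_add, Finset.sum_add_distrib, ← C_mul, ← map_sum C, ← Int.cast_mul, ← Int.cast_sum,
    Int.sum_mul_sign_mul_eq_of_abs_eq_sum heq, add_comm]

theorem stmt_15_general (r : ℕ) (n : Fin (r + 1) → ℕ) (a : Fin (r + 1) → ℤ) (a0 : ℤ)
    (ha0 : a0 ≠ 0) (ha : ∀ i, a i ≠ 0)
    (heq : |a0| = ∑ i, |a i|)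
    (f : ℤ[X]) (hf : f = C a0 + ∑ i, C (a i) * X ^ (n i))
    (ζ : ℂ) (hζ : ∃ k : ℕ, 0 < k ∧ ζ ^ k = 1) (hroot : aeval ζ f = 0) :
    (∀ i, ζ ^ (n i) = -(((a0 * a i).sign : ℤ) : ℂ)) ∧
      (Finset.univ.gcd fun i => (X : ℚ[X]) ^ (n i) + C (((a0 * a i).sign : ℤ) : ℚ)) ∣
        f.map (Int.castRingHom ℚ) := by
  obtain ⟨k, hk, hζk⟩ := hζ
  have hζnorm : ‖ζ‖ = 1 := Complex.norm_eq_one_of_pow_eq_one hζk hk.ne'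
  have hsum : (a0 : ℂ) + ∑ i, (a i : ℂ) * ζ ^ n i = 0 := by simpa [hf] using hroot
  have hmap : f.map (Int.castRingHom ℚ) = C (a0 : ℚ) + ∑ i, C (a i : ℚ) * X ^ n i := by
    simp [hf, Polynomial.map_sum]
  refine ⟨fun i => ?_, ?_⟩
  · exact eq_neg_sign_of_add_sum_eq_zero ha0 (fun i _ => ha i) heq
      (fun i _ => by rw [norm_pow, hζnorm, one_pow]) hsum i (Finset.mem_univ i)
  · rw [hmap, C_add_sum_eq_sum_mul_X_pow_add_sign n heq]
    exact Finset.dvd_sum fun i hi => (Finset.gcd_dvd hi).mul_left _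

theorem stmt_15 (r : ℕ) (n : Fin (r + 1) → ℕ) (a : Fin (r + 1) → ℤ) (a0 : ℤ)
    (hmono : StrictMono n) (hpos : 0 < n 0) (ha0 : a0 ≠ 0) (ha : ∀ i, a i ≠ 0)
    (heq : |a0| = ∑ i, |a i|)
    (f : ℤ[X]) (hf : f = C a0 + ∑ i, C (a i) * X ^ (n i))
    (ζ : ℂ) (hζ : ∃ k : ℕ, 0 < k ∧ ζ ^ k = 1) (hroot : aeval ζ f = 0) :
    (∀ i, ζ ^ (n i) = -(((a0 * a i).sign : ℤ) : ℂ)) ∧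
      (Finset.univ.gcd fun i => (X : ℚ[X]) ^ (n i) + C (((a0 * a i).sign : ℤ) : ℚ)) ∣
        f.map (Int.castRingHom ℚ) :=
  stmt_15_general r n a a0 ha0 ha heq f hf ζ hζ hroot
end

section
/- Let f(x) = a_{n_r}x^{n_r} + ... + a_{n_1}x^{n_1} + a_0 ∈ Z[x] with all coefficients nonzero and |a_0| = |a_{n_1}| + ... + |a_{n_r}|. Then every root of unity that is a root of f is a simple root of f; that is, f and f' have no common root of unity. -/
/-!
On the unit circle `|a i * ζ ^ n i| = |a i|`, so `f ζ = 0` together with `|a0| = ∑ |a i|` is a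
case of equality in the triangle inequality: after multiplying by `-a0`, every term
`w i = -a0 * a i * ζ ^ n i` is a positive real. Since `ζ f'(ζ) = ∑ n i * a i * ζ ^ n i`, the number
`-a0 * ζ f'(ζ) = ∑ n i * w i` is a sum of nonnegative reals with a positive term, hence nonzero.
-/

open Polynomial

open scoped ComplexOrder

theorem Polynomial.X_mul_derivative_X_pow {R : Type*} [CommSemiring R] (n : ℕ) :
    X * derivative (X ^ n : R[X]) = C (n : R) * X ^ n := by
  cases n with
  | zero => simp
  | succ m => rw [derivative_X_pow, Nat.add_sub_cancel, pow_succ']; ring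

theorem Polynomial.X_mul_derivative_sum_C_mul_X_pow {R ι : Type*} [CommSemiring R]
    (s : Finset ι) (a : ι → R) (n : ι → ℕ) :
    X * derivative (∑ i ∈ s, C (a i) * X ^ n i) = ∑ i ∈ s, C (a i * n i) * X ^ n i := by
  simp only [derivative_sum, derivative_C_mul, Finset.mul_sum, mul_left_comm X,
    X_mul_derivative_X_pow, C_mul, mul_assoc]

theorem Complex.nonneg_of_sum_eq_sum_norm {ι : Type*} {s : Finset ι} {w : ι → ℂ}
    (h : ∑ i ∈ s, w i = ((∑ i ∈ s, ‖w i‖ : ℝ) : ℂ)) : ∀ i ∈ s, 0 ≤ w i := by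
  have hre : ∑ i ∈ s, (w i).re = ∑ i ∈ s, ‖w i‖ := by
    rw [← Complex.re_sum, h, Complex.ofReal_re]
  intro i hi
  exact Complex.re_eq_norm.mp <|
    (Finset.sum_eq_sum_iff_of_le fun j _ ↦ Complex.re_le_norm (w j)).mp hre i hi

theorem Complex.sum_ofReal_mul_ne_zero_of_sum_eq_sum_norm {ι : Type*} {s : Finset ι}
    {w : ι → ℂ} {t : ι → ℝ} (h : ∑ i ∈ s, w i = ((∑ i ∈ s, ‖w i‖ : ℝ) : ℂ))
    (ht : ∀ i ∈ s, 0 ≤ t i) {j : ι} (hj : j ∈ s) (htj : 0 < t j) (hwj : w j ≠ 0) :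
    ∑ i ∈ s, (t i : ℂ) * w i ≠ 0 := by
  have hw := Complex.nonneg_of_sum_eq_sum_norm h
  refine (Finset.sum_pos' (fun i hi ↦ mul_nonneg ?_ (hw i hi)) ⟨j, hj, ?_⟩).ne'
  · exact_mod_cast ht i hi
  · exact mul_pos (by exact_mod_cast htj) ((hw j hj).lt_of_ne' hwj)

theorem stmt_16_general (r : ℕ) (n : Fin (r + 1) → ℕ) (a : Fin (r + 1) → ℤ) (a0 : ℤ)
    (hpos : 0 < n 0) (ha0 : a0 ≠ 0) (ha : ∀ i, a i ≠ 0)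
    (heq : |a0| = ∑ i, |a i|)
    (f : ℤ[X]) (hf : f = C a0 + ∑ i, C (a i) * X ^ (n i))
    (ζ : ℂ) (hζ : ∃ k : ℕ, 0 < k ∧ ζ ^ k = 1) (hroot : aeval ζ f = 0) :
    aeval ζ (derivative f) ≠ 0 := by
  obtain ⟨k, hk, hζk⟩ := hζ
  have hζ1 : ‖ζ‖ = 1 := Complex.norm_eq_one_of_pow_eq_one hζk hk.ne'
  set z : Fin (r + 1) → ℂ := fun i ↦ a i * ζ ^ n i
  have hsum : ∑ i, z i = -a0 := by
    simp only [hf, eq_intCast, map_add, map_intCast, map_sum, map_mul, map_pow, aeval_X] at hroot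
    linear_combination hroot
  have hderiv : ζ * aeval ζ (derivative f) = ∑ i, (n i : ℝ) * z i := by
    have hXf : X * derivative f = ∑ i, C (a i * n i) * X ^ n i := by
      rw [hf, derivative_add, derivative_C, zero_add, X_mul_derivative_sum_C_mul_X_pow]
    calc ζ * aeval ζ (derivative f) = aeval ζ (X * derivative f) := by rw [map_mul, aeval_X]
      _ = ∑ i, (n i : ℝ) * z i := by
        simp only [hXf, z, map_sum, map_mul, map_pow, aeval_X, eq_intCast, map_intCast,
          map_natCast, Complex.ofReal_natCast]
        exact Finset.sum_congr rfl fun i _ ↦ by ring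
  set w : Fin (r + 1) → ℂ := fun i ↦ -a0 * z i
  have hw : ∑ i, w i = ((∑ i, ‖w i‖ : ℝ) : ℂ) := by
    have hnorm : ∀ i, ‖w i‖ = |a0| * |a i| := fun i ↦ by simp [w, z, hζ1, Int.cast_abs]
    rw [Finset.sum_congr rfl fun i _ ↦ hnorm i, ← Finset.mul_sum, ← Finset.mul_sum, hsum,
      ← Int.cast_sum, ← heq, ← Int.cast_mul, abs_mul_abs_self]
    push_cast
    ring
  have hw0 : w 0 ≠ 0 := by
    simp [w, z, ha0, ha 0, ne_zero_of_norm_ne_zero (hζ1.trans_ne one_ne_zero)]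
  intro hzero
  apply Complex.sum_ofReal_mul_ne_zero_of_sum_eq_sum_norm hw (fun i _ ↦ Nat.cast_nonneg (n i))
    (Finset.mem_univ 0) (by exact_mod_cast hpos) hw0
  simp only [w, mul_left_comm _ (-(a0 : ℂ)), ← Finset.mul_sum, ← hderiv, hzero, mul_zero]

theorem stmt_16 (r : ℕ) (n : Fin (r + 1) → ℕ) (a : Fin (r + 1) → ℤ) (a0 : ℤ)
    (hmono : StrictMono n) (hpos : 0 < n 0) (ha0 : a0 ≠ 0) (ha : ∀ i, a i ≠ 0)
    (heq : |a0| = ∑ i, |a i|)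
    (f : ℤ[X]) (hf : f = C a0 + ∑ i, C (a i) * X ^ (n i))
    (ζ : ℂ) (hζ : ∃ k : ℕ, 0 < k ∧ ζ ^ k = 1) (hroot : aeval ζ f = 0) :
    aeval ζ (derivative f) ≠ 0 :=
  stmt_16_general r n a a0 hpos ha0 ha heq f hf ζ hζ hroot
end

section
/- Let p be a prime, a, b positive integers with p ∤ ab, gcd(a,b) = 1, and let n > m ≥ 1 with gcd(n,m) = 1. Let u ≥ 2, b < p^u, and ε_1, ε_2 ∈ {−1, 1}. If the trinomial f(x) = a x^n + b ε_1 x^m + p^u ε_2 has a multiple root (i.e., is not separable over Q), then b = n, p divides m, p^{u(n−m)} a^m = (n−m)^{n−m} m^m, and ε_2^{n−m}(−ε_1)^n = 1. -/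
open Polynomial

theorem stmt_18 (p : ℕ) (hp : p.Prime) (a b : ℕ) (hapos : 0 < a) (hbpos : 0 < b)
    (hpab : ¬ p ∣ a * b) (hab : Nat.gcd a b = 1)
    (n m : ℕ) (hm : 1 ≤ m) (hnm : m < n) (hgcd : Nat.gcd n m = 1)
    (u : ℕ) (hu : 2 ≤ u) (hb : b < p ^ u)
    (ε₁ ε₂ : ℤ) (hε₁ : ε₁ = 1 ∨ ε₁ = -1) (hε₂ : ε₂ = 1 ∨ ε₂ = -1)
    (f : ℤ[X])
    (hf : f = C (a : ℤ) * X ^ n + C ((b : ℤ) * ε₁) * X ^ m + C ((p : ℤ) ^ u * ε₂))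
    (hsep : ∃ z : ℂ, aeval z f = 0 ∧ aeval z (derivative f) = 0) :
    b = n ∧ p ∣ m ∧ (p : ℤ) ^ (u * (n - m)) * (a : ℤ) ^ m = ((n : ℤ) - m) ^ (n - m) * (m : ℤ) ^ m
      ∧ ε₂ ^ (n - m) * (-ε₁) ^ n = 1 := by
  obtain ⟨k, rfl⟩ : ∃ k, n = m + k := ⟨n - m, by omega⟩
  have hk1 : 1 ≤ k := by omega
  obtain ⟨z, hz0, hz1⟩ := hsep
  rw [hf] at hz0 hz1
  rw [derivative_add, derivative_add, derivative_C, derivative_C_mul_X_pow,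
    derivative_C_mul_X_pow] at hz1
  simp only [map_add, map_mul, aeval_C, aeval_X_pow, add_zero] at hz0 hz1
  push_cast at hz0 hz1
  simp only [algebraMap_int_eq, eq_intCast] at hz0 hz1
  -- hz0 : (a:ℂ) * z ^ (m + k) + b * ε₁ * z ^ m + p ^ u * ε₂ = 0
  -- hz1 : (a:ℂ) * (m + k) * z ^ (m + k - 1) + b * ε₁ * m * z ^ (m - 1) = 0
  have hzne : z ≠ 0 := by
    intro h
    rw [h] at hz0
    rw [zero_pow (by omega : m + k ≠ 0), zero_pow (by omega : m ≠ 0)] at hz0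
    have hpne : ((p:ℂ))^u ≠ 0 := pow_ne_zero _ (by exact_mod_cast hp.ne_zero)
    rcases hε₂ with rfl | rfl <;> simp [hpne] at hz0
  have hy : z ^ (m - 1) ≠ 0 := pow_ne_zero _ hzne
  have hsplit : z ^ (m + k - 1) = z ^ k * z ^ (m - 1) := by
    rw [← pow_add]; congr 1; omega
  have hzm : z ^ m = z * z ^ (m - 1) := by
    rw [← pow_succ']; congr 1; omega
  have E1 : (a:ℂ) * ((m:ℂ)+k) * z ^ k = -((b:ℂ) * ε₁ * m) := by
    refine mul_left_cancel₀ hy ?_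
    linear_combination hz1 - ((a:ℂ) * ((m:ℂ)+k)) * hsplit
  have E2 : (b:ℂ) * ε₁ * k * z ^ m = -(((m:ℂ)+k) * ((p:ℂ)^u * ε₂)) := by
    linear_combination ((m:ℂ)+(k:ℂ)) * hz0 - z * hz1
      - ((a:ℂ)*((m:ℂ)+(k:ℂ))*z^k + (b:ℂ)*(ε₁:ℂ)*(m:ℂ)) * hzm
      + ((a:ℂ)*((m:ℂ)+(k:ℂ))*z) * hsplit
  have key : ∀ A B C D : ℂ, A * z ^ k = -B → C * z ^ m = -D →
      A ^ m * (-D) ^ k = (-B) ^ m * C ^ k := by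
    intro A B C D h1 h2
    calc A ^ m * (-D) ^ k = A ^ m * (C * z ^ m) ^ k := by rw [h2]
      _ = (A * z ^ k) ^ m * C ^ k := by ring
      _ = (-B) ^ m * C ^ k := by rw [h1]
  have keyC := key _ _ _ _ E1 E2
  have keyZ : ((a:ℤ)*((m:ℤ)+k))^m * (-(((m:ℤ)+k)*((p:ℤ)^u*ε₂)))^k
      = (-((b:ℤ)*ε₁*(m:ℤ)))^m * ((b:ℤ)*ε₁*(k:ℤ))^k := by exact_mod_cast keyC
  clear keyC key E1 E2 hz0 hz1 hzm hsplit hy hzne hf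
  have hs : (a:ℤ)^m * ((m:ℤ)+k)^(m+k) * (p:ℤ)^(u*k) * (ε₂^k * (-ε₁)^(m+k))
      = (b:ℤ)^(m+k) * (m:ℤ)^m * (k:ℤ)^k := by
    rcases hε₁ with rfl | rfl <;> rcases hε₂ with rfl | rfl <;>
      rcases Nat.even_or_odd m with hm' | hm' <;> rcases Nat.even_or_odd k with hk' | hk' <;>
      simp only [mul_pow, pow_add, pow_mul, hm'.neg_pow, hk'.neg_pow, one_pow, mul_one, neg_neg,
        mul_neg, neg_mul, one_mul, neg_neg] at keyZ ⊢ <;>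
      first
        | linear_combination keyZ
        | linear_combination -keyZ
  have hunit : IsUnit (ε₂ ^ k * (-ε₁) ^ (m+k)) :=
    ((Int.isUnit_iff.mpr hε₂).pow k).mul (((Int.isUnit_iff.mpr hε₁).neg).pow (m+k))
  have hsign : ε₂ ^ k * (-ε₁) ^ (m+k) = 1 := by
    rcases Int.isUnit_iff.mp hunit with h1 | h1
    · exact h1
    · exfalso
      rw [h1, mul_neg_one] at hs
      have ha' : (0:ℤ) < (a:ℤ) := by exact_mod_cast hapos
      have hp' : (0:ℤ) < (p:ℤ) := by exact_mod_cast hp.pos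
      have hmk' : (0:ℤ) < (m:ℤ)+k := by push_cast; omega
      have h2 : (0:ℤ) < (a:ℤ)^m * ((m:ℤ)+k)^(m+k) * (p:ℤ)^(u*k) :=
        mul_pos (mul_pos (pow_pos ha' m) (pow_pos hmk' _)) (pow_pos hp' _)
      have h3 : (0:ℤ) ≤ (b:ℤ)^(m+k) * (m:ℤ)^m * (k:ℤ)^k := by positivity
      linarith
  rw [hsign, mul_one] at hs
  have natA : a^m * (m+k)^(m+k) * p^(u*k) = b^(m+k) * m^m * k^k := by exact_mod_cast hs
  have hpa : ¬ p ∣ a := fun h => hpab (h.mul_right b)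
  have hpb : ¬ p ∣ b := fun h => hpab (h.mul_left a)
  have hba : Nat.Coprime b a := Nat.Coprime.symm hab
  have hbp : Nat.Coprime b p := ((hp.coprime_iff_not_dvd).mpr hpb).symm
  have hbn : b ∣ m + k := by
    have h1 : b^(m+k) ∣ (a^m * p^(u*k)) * (m+k)^(m+k) := by
      rw [show (a^m * p^(u*k)) * (m+k)^(m+k) = a^m * (m+k)^(m+k) * p^(u*k) by ring, natA]
      exact ⟨m^m * k^k, by ring⟩
    have hcop : Nat.Coprime (b^(m+k)) (a^m * p^(u*k)) :=
      (((hba.pow_right m).mul_right (hbp.pow_right (u*k)))).pow_left _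
    exact (Nat.pow_dvd_pow_iff (by omega)).mp (hcop.dvd_of_dvd_mul_left h1)
  have hnm' : Nat.Coprime (m+k) m := hgcd
  have hnk : Nat.Coprime (m+k) k := by
    have h := Nat.Coprime.symm hnm'
    rw [add_comm m k, Nat.coprime_add_self_right] at h
    rw [Nat.coprime_add_self_left]
    exact h
  have hnb : (m + k) ∣ b := by
    have h1 : (m+k)^(m+k) ∣ (m^m * k^k) * b^(m+k) := by
      rw [show (m^m * k^k) * b^(m+k) = b^(m+k) * m^m * k^k by ring, ← natA]
      exact ⟨a^m * p^(u*k), by ring⟩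
    have hcop : Nat.Coprime ((m+k)^(m+k)) (m^m * k^k) :=
      ((hnm'.pow_right m).mul_right (hnk.pow_right k)).pow_left _
    exact (Nat.pow_dvd_pow_iff (by omega)).mp (hcop.dvd_of_dvd_mul_left h1)
  have hbeq : b = m + k := Nat.dvd_antisymm hbn hnb
  subst hbeq
  have hA2 : a^m * p^(u*k) = m^m * k^k := by
    have hpos : 0 < (m+k)^(m+k) := by positivity
    apply Nat.eq_of_mul_eq_mul_left hpos
    calc (m+k)^(m+k) * (a^m * p^(u*k)) = a^m * (m+k)^(m+k) * p^(u*k) := by ring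
      _ = (m+k)^(m+k) * m^m * k^k := natA
      _ = (m+k)^(m+k) * (m^m * k^k) := by ring
  have hkeq : m + k - m = k := by omega
  rw [hkeq]
  refine ⟨rfl, ?_, ?_, hsign⟩
  · -- p ∣ m
    by_contra hpm
    have hmf : m.factorization p = 0 := Nat.factorization_eq_zero_of_not_dvd hpm
    have haf : a.factorization p = 0 := Nat.factorization_eq_zero_of_not_dvd hpa
    have e1 : (a^m * p^(u*k)).factorization p = u*k := by
      rw [Nat.factorization_mul (pow_ne_zero _ (by omega)) (pow_ne_zero _ hp.ne_zero)]
      simp [Nat.factorization_pow, haf, hp.factorization]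
    have e2 : (m^m * k^k).factorization p = k * k.factorization p := by
      rw [Nat.factorization_mul (pow_ne_zero _ (by omega)) (pow_ne_zero _ (by omega))]
      simp [Nat.factorization_pow, hmf]
    rw [hA2, e2] at e1
    have e3 : k.factorization p = u := by
      rw [mul_comm u k] at e1
      exact Nat.eq_of_mul_eq_mul_left (show 0 < k by omega) e1
    have e4 : p ^ u ∣ k := by
      rw [← e3]; exact Nat.ordProj_dvd k p
    have e5 : p ^ u ≤ k := Nat.le_of_dvd (by omega) e4
    omega
  · have hZ : ((a:ℤ))^m * (p:ℤ)^(u*k) = (m:ℤ)^m * (k:ℤ)^k := by exact_mod_cast hA2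
    have hck : (((m+k:ℕ):ℤ) - m) = (k:ℤ) := by push_cast; ring
    rw [hck]
    linear_combination hZ
end
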